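/- Let R be a 2×2 matrix of natural numbers which is not one of the four matrices [[4,2],[2,2]], [[4,2],[2,1]], [[3,2],[2,2]], [[3,2],[2,1]]. Then either for every x ∈ GL₆(𝕂) with rank matrix R(x) = R one has x·x_left ∉ Lie(P)·x + x·Lie(P)^τ, or for every x ∈ GL₆(𝕂) with R(x) = R one has x_right·x ∉ Lie(P)·x + x·Lie(P)^τ. -/

import Mathlib

open Matrix

/-- The Lie algebra of the parabolic `P ⊆ GL₆(𝕂)`: block upper triangular `6 × 6`
matrices with respect to the partition `(2,2,2)` of `6`. -/
def LieP (𝕂 : Type*) [RCLike 𝕂] : Set (Matrix (Fin 6) (Fin 6) 𝕂) :=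
  {p | ∀ i j : Fin 6, (j : ℕ) / 2 < (i : ℕ) / 2 → p i j = 0}

/-- `Lie(P)^τ`, the image of `Lie(P)` under matrix transpose. -/
def LiePtau (𝕂 : Type*) [RCLike 𝕂] : Set (Matrix (Fin 6) (Fin 6) 𝕂) :=
  {q | qᵀ ∈ LieP 𝕂}

/-- The block matrix `x_left = [[0,I₂,0],[0,0,I₂],[0,0,0]]` (2×2 blocks). -/
def xLeft (𝕂 : Type*) [RCLike 𝕂] : Matrix (Fin 6) (Fin 6) 𝕂 :=
  Matrix.of fun i j => if (j : ℕ) = (i : ℕ) + 2 then 1 else 0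

/-- `x_right = x_left^τ`. -/
def xRight (𝕂 : Type*) [RCLike 𝕂] : Matrix (Fin 6) (Fin 6) 𝕂 := (xLeft 𝕂)ᵀ

/-- The set `Lie(P)·x + x·Lie(P)^τ = {p·x + x·q : p ∈ Lie(P), q ∈ Lie(P)^τ}`. -/
def tanSet {𝕂 : Type*} [RCLike 𝕂] (x : Matrix (Fin 6) (Fin 6) 𝕂) :
    Set (Matrix (Fin 6) (Fin 6) 𝕂) :=
  {m | ∃ p ∈ LieP 𝕂, ∃ q ∈ LiePtau 𝕂, m = p * x + x * q}

/-- The lower right `i × j` corner block of a `6 × 6` matrix. -/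
def corner {𝕂 : Type*} [RCLike 𝕂] (i j : ℕ) (hi : i ≤ 6) (hj : j ≤ 6)
    (x : Matrix (Fin 6) (Fin 6) 𝕂) : Matrix (Fin i) (Fin j) 𝕂 :=
  Matrix.of fun a b =>
    x ⟨6 - i + a.1, by have := a.2; omega⟩ ⟨6 - j + b.1, by have := b.2; omega⟩

/-- The rank matrix `R(x) = [[r₄ₓ₄(x), r₄ₓ₂(x)], [r₂ₓ₄(x), r₂ₓ₂(x)]]`, where
`r_{i×j}(x)` is the rank of the lower right `i × j` corner block of `x`. -/
noncomputable def rankMatrix {𝕂 : Type*} [RCLike 𝕂] (x : Matrix (Fin 6) (Fin 6) 𝕂) :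
    Matrix (Fin 2) (Fin 2) ℕ :=
  !![(corner 4 4 (by norm_num) (by norm_num) x).rank,
     (corner 4 2 (by norm_num) (by norm_num) x).rank;
     (corner 2 4 (by norm_num) (by norm_num) x).rank,
     (corner 2 2 (by norm_num) (by norm_num) x).rank]

/-!
If `m = p·x + x·q` with `p ∈ Lie(P)` and `q ∈ Lie(P)^τ`, then `uᵀ m v = 0` whenever, for some
block-aligned lower right corner, `u` (supported on its rows) kills it from the left and `v`
(supported on its columns) kills it from the right: `pᵀ` and `q` preserve these supports.

Take `m = x·x_left`, which shifts the columns of `x` one block to the right, and let `u` be a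
left kernel vector of the `i × 4` corner (`i = 2` or `4`). If every column of that corner is a
combination of its last two columns, say column `c` agrees with `x w` there, pairing with
`v = e_c - w` kills the entry `c - 2` of `uᵀ x`; so `uᵀ x = 0`, which is impossible for
invertible `x`. For `i = 2` this applies as soon as `r₂ₓ₄ ≤ 1` (when `r₂ₓ₂ = 0` the pairing
first kills the whole `2 × 4` corner), for `i = 4` as soon as `r₄ₓ₂ = r₄ₓ₄`. Transposing handles
`x_right·x` when `r₄ₓ₂ ≤ 1`. What survives, `r₄ₓ₂ = r₂ₓ₄ = 2 ≤ r₄ₓ₄ ≠ 2` and `r₂ₓ₂ ≥ 1`, are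
the four exceptional rank matrices.
-/

namespace Matrix

variable {m n n' K : Type*} [Field K]

theorem exists_vecMul_eq_zero_of_rank_lt [Fintype m] [Fintype n] (A : Matrix m n K)
    (h : A.rank < Fintype.card m) : ∃ u ≠ 0, u ᵥ* A = 0 := by
  have hA : ¬LinearIndependent K A.row := by
    rw [linearIndependent_iff_card_eq_finrank_span, Set.finrank, ← rank_eq_finrank_span_row]
    exact h.ne'
  obtain ⟨u, hu, i, hi⟩ := Fintype.not_linearIndependent_iff.mp hA
  exact ⟨u, fun h0 => hi (congrFun h0 i), by rwa [vecMul_eq_sum]⟩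

theorem rank_eq_zero_iff [Fintype m] [Fintype n] (A : Matrix m n K) : A.rank = 0 ↔ A = 0 := by
  classical
  rw [rank, Submodule.finrank_eq_zero, LinearMap.range_eq_bot, ← toLin'_apply',
    LinearEquiv.map_eq_zero_iff]

theorem exists_mulVec_eq_col_of_rank_submatrix_eq [Fintype m] [Fintype n] [Fintype n']
    (A : Matrix m n K) (g : n' → n) (hA : (A.submatrix id g).rank = A.rank) (c : n) :
    ∃ w, A.submatrix id g *ᵥ w = A.col c := by
  have hle : Submodule.span K (Set.range (A.submatrix id g).col) ≤
      Submodule.span K (Set.range A.col) :=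
    Submodule.span_mono (Set.range_subset_iff.mpr fun j => ⟨g j, rfl⟩)
  have hspan := Submodule.eq_of_le_of_finrank_eq hle (by
    rwa [← rank_eq_finrank_span_cols, ← rank_eq_finrank_span_cols])
  have hc : A.col c ∈ Submodule.span K (Set.range (A.submatrix id g).col) :=
    hspan ▸ Submodule.subset_span ⟨c, rfl⟩
  obtain ⟨w, hw⟩ := (Submodule.mem_span_range_iff_exists_fun K).mp hc
  refine ⟨w, funext fun a => ?_⟩
  simpa [mulVec, dotProduct, mul_comm] using congrFun hw a

end Matrix

theorem Function.Injective.extend_zero_dotProduct {K ι κ : Type*} [CommSemiring K] [Fintype ι]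
    [Fintype κ] {e : ι → κ} (he : Function.Injective e) (v : ι → K) (w : κ → K) :
    Function.extend e v 0 ⬝ᵥ w = v ⬝ᵥ (w ∘ e) := by
  classical
  simp only [dotProduct]
  rw [← Finset.sum_subset (Finset.subset_univ (Finset.univ.map ⟨e, he⟩)), Finset.sum_map]
  · simp [he.extend_apply]
  · intro k _ hk
    rw [Function.extend_apply' _ _ _ fun ⟨a, ha⟩ => hk (by simp [← ha]), Pi.zero_apply, zero_mul]

theorem dotProduct_eq_zero_of_lt_of_le {R : Type*} [NonUnitalNonAssocSemiring R] {n s : ℕ}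
    {u w : Fin n → R} (hu : ∀ k : Fin n, (k : ℕ) < s → u k = 0)
    (hw : ∀ k : Fin n, s ≤ (k : ℕ) → w k = 0) : u ⬝ᵥ w = 0 :=
  Finset.sum_eq_zero fun k _ => by
    rcases lt_or_ge (k : ℕ) s with hk | hk
    · rw [hu k hk, zero_mul]
    · rw [hw k hk, mul_zero]


def lastEmb {n i : ℕ} (hi : i ≤ n) (a : Fin i) : Fin n := ⟨n - i + a, by omega⟩

section lastEmb

variable {n i j : ℕ}

theorem lastEmb_injective (hi : i ≤ n) : Function.Injective (lastEmb hi) :=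
  fun a b h => Fin.ext (by simpa [lastEmb] using h)

theorem mem_range_lastEmb (hi : i ≤ n) {k : Fin n} :
    k ∈ Set.range (lastEmb hi) ↔ n - i ≤ k := by
  refine ⟨?_, fun hk => ⟨⟨k - (n - i), by omega⟩, Fin.ext (by simp [lastEmb]; omega)⟩⟩
  rintro ⟨a, rfl⟩
  simp [lastEmb]

theorem lastEmb_comp_lastEmb (hij : i ≤ j) (hj : j ≤ n) :
    lastEmb hj ∘ lastEmb hij = lastEmb (hij.trans hj) :=
  funext fun a => Fin.ext (by simp [lastEmb]; omega)

end lastEmb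

section corner

variable {𝕂 : Type*} [RCLike 𝕂] {i j : ℕ} (hi : i ≤ 6) (hj : j ≤ 6)

theorem corner_eq_submatrix (x : Matrix (Fin 6) (Fin 6) 𝕂) :
    corner i j hi hj x = x.submatrix (lastEmb hi) (lastEmb hj) := rfl

theorem corner_transpose (x : Matrix (Fin 6) (Fin 6) 𝕂) :
    corner i j hi hj xᵀ = (corner j i hj hi x)ᵀ := rfl

theorem corner_submatrix_lastEmb {j' : ℕ} (hj' : j' ≤ j) (x : Matrix (Fin 6) (Fin 6) 𝕂) :
    (corner i j hi hj x).submatrix id (lastEmb hj') = corner i j' hi (hj'.trans hj) x := by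
  rw [corner_eq_submatrix, Matrix.submatrix_submatrix, lastEmb_comp_lastEmb]
  rfl

theorem rank_corner_le_rank_corner {j' : ℕ} (hj' : j' ≤ j) (x : Matrix (Fin 6) (Fin 6) 𝕂) :
    (corner i j' hi (hj'.trans hj) x).rank ≤ (corner i j hi hj x).rank :=
  corner_submatrix_lastEmb hi hj hj' x ▸ Matrix.rank_submatrix_le _ _ _

theorem corner_eq_zero_iff {x : Matrix (Fin 6) (Fin 6) 𝕂} :
    corner i j hi hj x = 0 ↔
      ∀ r c : Fin 6, 6 - i ≤ (r : ℕ) → 6 - j ≤ (c : ℕ) → x r c = 0 := by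
  refine ⟨fun h r c hr hc => ?_, fun h => Matrix.ext fun a b => h _ _
    ((mem_range_lastEmb hi).mp ⟨a, rfl⟩) ((mem_range_lastEmb hj).mp ⟨b, rfl⟩)⟩
  obtain ⟨a, rfl⟩ := (mem_range_lastEmb hi).mpr hr
  obtain ⟨b, rfl⟩ := (mem_range_lastEmb hj).mpr hc
  exact congrFun (congrFun h a) b

theorem exists_vecMul_eq_zero_of_rank_corner_lt {x : Matrix (Fin 6) (Fin 6) 𝕂}
    (h : (corner i j hi hj x).rank < i) :
    ∃ u ≠ 0, (∀ k : Fin 6, (k : ℕ) < 6 - i → u k = 0) ∧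
      ∀ k : Fin 6, 6 - j ≤ (k : ℕ) → (u ᵥ* x) k = 0 := by
  obtain ⟨u, hu, hux⟩ := (corner i j hi hj x).exists_vecMul_eq_zero_of_rank_lt (by simpa using h)
  refine ⟨Function.extend (lastEmb hi) u 0, fun h0 => hu (funext fun a => ?_), fun k hk => ?_,
    fun k hk => ?_⟩
  · simpa [(lastEmb_injective hi).extend_apply] using congrFun h0 (lastEmb hi a)
  · exact Function.extend_apply' _ _ _ fun hk' => by
      have := (mem_range_lastEmb hi).mp hk'; omega
  · obtain ⟨b, rfl⟩ := (mem_range_lastEmb hj).mpr hk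
    exact ((lastEmb_injective hi).extend_zero_dotProduct u _).trans (congrFun hux b)

theorem exists_mulVec_eq_col_of_rank_corner_eq {j' : ℕ} (hj' : j' ≤ j)
    {x : Matrix (Fin 6) (Fin 6) 𝕂}
    (h : (corner i j' hi (hj'.trans hj) x).rank = (corner i j hi hj x).rank)
    (c : Fin 6) (hc : 6 - j ≤ (c : ℕ)) :
    ∃ w, (∀ k : Fin 6, (k : ℕ) < 6 - j' → w k = 0) ∧
      ∀ k : Fin 6, 6 - i ≤ (k : ℕ) → (x *ᵥ w) k = x k c := by
  obtain ⟨c, rfl⟩ := (mem_range_lastEmb hj).mpr hc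
  have hsub := corner_submatrix_lastEmb hi hj hj' x
  obtain ⟨w, hw⟩ := (corner i j hi hj x).exists_mulVec_eq_col_of_rank_submatrix_eq (lastEmb hj')
    (by rw [hsub, h]) c
  rw [hsub] at hw
  refine ⟨Function.extend (lastEmb (hj'.trans hj)) w 0, fun k hk => ?_, fun k hk => ?_⟩
  · exact Function.extend_apply' _ _ _ fun hk' => by
      have := (mem_range_lastEmb _).mp hk'; omega
  · obtain ⟨a, rfl⟩ := (mem_range_lastEmb hi).mpr hk
    rw [Matrix.mulVec, dotProduct_comm, (lastEmb_injective _).extend_zero_dotProduct,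
      dotProduct_comm]
    exact congrFun hw a

end corner

section tanSet

variable {𝕂 : Type*} [RCLike 𝕂] {s t : ℕ}

theorem vecMul_apply_eq_zero_of_mem_LieP {p : Matrix (Fin 6) (Fin 6) 𝕂} (hp : p ∈ LieP 𝕂)
    (hs : 2 ∣ s) {u : Fin 6 → 𝕂} (hu : ∀ k : Fin 6, (k : ℕ) < s → u k = 0) :
    ∀ k : Fin 6, (k : ℕ) < s → (u ᵥ* p) k = 0 := fun k hk =>
  dotProduct_eq_zero_of_lt_of_le hu fun l hl => hp l k (by omega)

theorem mulVec_apply_eq_zero_of_mem_LiePtau {q : Matrix (Fin 6) (Fin 6) 𝕂} (hq : q ∈ LiePtau 𝕂)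
    (ht : 2 ∣ t) {v : Fin 6 → 𝕂} (hv : ∀ k : Fin 6, (k : ℕ) < t → v k = 0) :
    ∀ k : Fin 6, (k : ℕ) < t → (q *ᵥ v) k = 0 := by
  rw [← vecMul_transpose]
  exact vecMul_apply_eq_zero_of_mem_LieP hq ht hv

theorem dotProduct_mulVec_eq_zero_of_mem_tanSet {x m : Matrix (Fin 6) (Fin 6) 𝕂}
    (hm : m ∈ tanSet x) (hs : 2 ∣ s) (ht : 2 ∣ t) {u v : Fin 6 → 𝕂}
    (hu : ∀ k : Fin 6, (k : ℕ) < s → u k = 0) (hv : ∀ k : Fin 6, (k : ℕ) < t → v k = 0)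
    (hxv : ∀ k : Fin 6, s ≤ (k : ℕ) → (x *ᵥ v) k = 0)
    (hux : ∀ k : Fin 6, t ≤ (k : ℕ) → (u ᵥ* x) k = 0) :
    u ⬝ᵥ m *ᵥ v = 0 := by
  obtain ⟨p, hp, q, hq, rfl⟩ := hm
  have hpx : u ⬝ᵥ (p * x) *ᵥ v = 0 := by
    rw [← mulVec_mulVec, dotProduct_mulVec]
    exact dotProduct_eq_zero_of_lt_of_le (vecMul_apply_eq_zero_of_mem_LieP hp hs hu) hxv
  have hxq : u ⬝ᵥ (x * q) *ᵥ v = 0 := by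
    rw [← mulVec_mulVec, dotProduct_mulVec, dotProduct_comm]
    exact dotProduct_eq_zero_of_lt_of_le (mulVec_apply_eq_zero_of_mem_LiePtau hq ht hv) hux
  rw [add_mulVec, dotProduct_add, hpx, hxq, add_zero]

theorem transpose_mul_xLeft_mem_tanSet {x : Matrix (Fin 6) (Fin 6) 𝕂}
    (h : xRight 𝕂 * x ∈ tanSet x) : xᵀ * xLeft 𝕂 ∈ tanSet xᵀ := by
  obtain ⟨p, hp, q, hq, he⟩ := h
  refine ⟨qᵀ, hq, pᵀ, show pᵀᵀ ∈ LieP 𝕂 by rwa [transpose_transpose], ?_⟩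
  rw [← transpose_transpose (xLeft 𝕂), ← xRight, ← transpose_mul, he, transpose_add,
    transpose_mul, transpose_mul, add_comm]

theorem vecMul_xLeft (f : Fin 6 → 𝕂) : f ᵥ* xLeft 𝕂 = ![0, 0, f 0, f 1, f 2, f 3] := by
  ext k
  fin_cases k <;> simp [vecMul, dotProduct, xLeft, Fin.sum_univ_six]

end tanSet

section transversal

variable {𝕂 : Type*} [RCLike 𝕂] {x : Matrix (Fin 6) (Fin 6) 𝕂}

theorem vecMul_vecMul_xLeft_apply_eq_zero (hm : x * xLeft 𝕂 ∈ tanSet x) {s : ℕ} (hs : 2 ∣ s)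
    {u : Fin 6 → 𝕂} (hu : ∀ k : Fin 6, (k : ℕ) < s → u k = 0)
    (hux : ∀ k : Fin 6, 2 ≤ (k : ℕ) → (u ᵥ* x) k = 0) {c : Fin 6} (hc : 2 ≤ (c : ℕ))
    {w : Fin 6 → 𝕂} (hw : ∀ k : Fin 6, (k : ℕ) < 4 → w k = 0)
    (hxw : ∀ k : Fin 6, s ≤ (k : ℕ) → (x *ᵥ w) k = x k c) :
    (u ᵥ* x ᵥ* xLeft 𝕂) c = 0 := by
  have hv : ∀ k : Fin 6, (k : ℕ) < 2 → (Pi.single c 1 - w : Fin 6 → 𝕂) k = 0 := by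
    intro k hk
    rw [Pi.sub_apply, Pi.single_eq_of_ne (by omega), hw k (by omega), sub_zero]
  have hxv : ∀ k : Fin 6, s ≤ (k : ℕ) → (x *ᵥ (Pi.single c 1 - w : Fin 6 → 𝕂)) k = 0 := by
    intro k hk
    rw [mulVec_sub, Pi.sub_apply, mulVec_single_one, hxw k hk, col_apply, sub_self]
  have hshift : ∀ k : Fin 6, 4 ≤ (k : ℕ) → (u ᵥ* x ᵥ* xLeft 𝕂) k = 0 := fun k hk => by
    rw [vecMul_xLeft]
    fin_cases k <;> simp_all
  have hw' : u ᵥ* x ᵥ* xLeft 𝕂 ⬝ᵥ w = 0 := by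
    rw [dotProduct_comm]
    exact dotProduct_eq_zero_of_lt_of_le hw hshift
  have hpair := dotProduct_mulVec_eq_zero_of_mem_tanSet hm hs (by norm_num) hu hv hxv hux
  rwa [dotProduct_mulVec, ← vecMul_vecMul, dotProduct_sub, dotProduct_single, mul_one, hw',
    sub_zero] at hpair

theorem corner_two_four_eq_zero (hm : x * xLeft 𝕂 ∈ tanSet x)
    (h : corner 2 2 (by norm_num) (by norm_num) x = 0) :
    corner 2 4 (by norm_num) (by norm_num) x = 0 := by
  rw [corner_eq_zero_iff] at h ⊢
  intro r c hr hc
  have hrow : ∀ k : Fin 6, 4 ≤ (k : ℕ) → (x.row r ᵥ* xLeft 𝕂) k = 0 := fun k hk => by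
    have := dotProduct_mulVec_eq_zero_of_mem_tanSet hm (s := 4) (t := 4) (by norm_num)
      (by norm_num) (u := Pi.single r 1) (v := Pi.single k 1)
      (fun l hl => Pi.single_eq_of_ne (by omega) _) (fun l hl => Pi.single_eq_of_ne (by omega) _)
      (fun l hl => by rw [mulVec_single_one]; exact h l k hl hk)
      (fun l hl => by rw [single_one_vecMul]; exact h r l hr hl)
    rwa [dotProduct_mulVec, ← vecMul_vecMul, single_one_vecMul, dotProduct_single,
      mul_one] at this
  have h2 : x r 2 = 0 := by simpa [vecMul_xLeft] using hrow 4 (by norm_num)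
  have h3 : x r 3 = 0 := by simpa [vecMul_xLeft] using hrow 5 (by norm_num)
  rcases (show c = 2 ∨ c = 3 ∨ 4 ≤ (c : ℕ) by omega) with rfl | rfl | hc4
  exacts [h2, h3, h r c hr hc4]

theorem mul_xLeft_notMem_tanSet_of_rank_corner_eq {i : ℕ} (hi : i ≤ 6) (hi2 : 2 ∣ i)
    (hx : IsUnit x.det) (hlt : (corner i 4 hi (by norm_num) x).rank < i)
    (heq : (corner i 2 hi (by norm_num) x).rank = (corner i 4 hi (by norm_num) x).rank) :
    x * xLeft 𝕂 ∉ tanSet x := by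
  intro hm
  obtain ⟨u, hu0, hu, hux⟩ := exists_vecMul_eq_zero_of_rank_corner_lt hi _ hlt
  have hshift : ∀ c : Fin 6, 2 ≤ (c : ℕ) → (u ᵥ* x ᵥ* xLeft 𝕂) c = 0 := fun c hc => by
    obtain ⟨w, hw, hxw⟩ :=
      exists_mulVec_eq_col_of_rank_corner_eq hi (by norm_num) (by norm_num) heq c hc
    exact vecMul_vecMul_xLeft_apply_eq_zero hm (by omega) hu hux hc hw hxw
  have h0 := hshift 2 (by norm_num)
  have h1 := hshift 3 (by norm_num)
  rw [vecMul_xLeft] at h0 h1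
  refine hx.ne_zero (exists_vecMul_eq_zero_iff.mp ⟨u, hu0, funext fun k => ?_⟩)
  fin_cases k
  exacts [h0, h1, hux 2 le_rfl, hux 3 (by norm_num), hux 4 (by norm_num), hux 5 (by norm_num)]

theorem two_le_rank_corner_two_four (hx : IsUnit x.det) (hm : x * xLeft 𝕂 ∈ tanSet x) :
    2 ≤ (corner 2 4 (by norm_num) (by norm_num) x).rank := by
  by_contra! hlt
  refine mul_xLeft_notMem_tanSet_of_rank_corner_eq (by norm_num) (by norm_num) hx hlt ?_ hm
  by_cases h0 : corner 2 2 (by norm_num) (by norm_num) x = 0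
  · rw [h0, corner_two_four_eq_zero hm h0, rank_zero, rank_zero]
  · refine le_antisymm (rank_corner_le_rank_corner _ _ (by norm_num) x) ?_
    have := (Matrix.rank_eq_zero_iff _).not.mpr h0
    omega

theorem rank_corner_two_two_ne_zero (hx : IsUnit x.det) (hm : x * xLeft 𝕂 ∈ tanSet x) :
    (corner 2 2 (by norm_num) (by norm_num) x).rank ≠ 0 := fun h => by
  have := two_le_rank_corner_two_four hx hm
  rw [corner_two_four_eq_zero hm ((Matrix.rank_eq_zero_iff _).mp h), rank_zero] at this
  omega

theorem rank_corner_four_two_ne_rank_corner_four_four (hx : IsUnit x.det)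
    (hm : x * xLeft 𝕂 ∈ tanSet x) :
    (corner 4 2 (by norm_num) (by norm_num) x).rank ≠
      (corner 4 4 (by norm_num) (by norm_num) x).rank := fun heq =>
  mul_xLeft_notMem_tanSet_of_rank_corner_eq (by norm_num) (by norm_num) hx
    (heq ▸ (rank_le_width _).trans_lt (by norm_num)) heq hm

theorem two_le_rank_corner_four_two (hx : IsUnit x.det) (hm : xRight 𝕂 * x ∈ tanSet x) :
    2 ≤ (corner 4 2 (by norm_num) (by norm_num) x).rank := by
  have := two_le_rank_corner_two_four (x := xᵀ) (by rwa [det_transpose])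
    (transpose_mul_xLeft_mem_tanSet hm)
  rwa [corner_transpose, rank_transpose] at this

end transversal

theorem transversal_of_not_exceptional {𝕂 : Type*} [RCLike 𝕂]
    (R : Matrix (Fin 2) (Fin 2) ℕ)
    (h1 : R ≠ !![4, 2; 2, 2]) (h2 : R ≠ !![4, 2; 2, 1])
    (h3 : R ≠ !![3, 2; 2, 2]) (h4 : R ≠ !![3, 2; 2, 1]) :
    (∀ x : Matrix (Fin 6) (Fin 6) 𝕂, IsUnit x.det → rankMatrix x = R →
        x * xLeft 𝕂 ∉ tanSet x) ∨
    (∀ x : Matrix (Fin 6) (Fin 6) 𝕂, IsUnit x.det → rankMatrix x = R →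
        xRight 𝕂 * x ∉ tanSet x) := by
  by_cases hb : R 0 1 ≤ 1
  · refine Or.inr fun x hx hR hm => ?_
    have := two_le_rank_corner_four_two hx hm
    subst hR
    simp [rankMatrix] at hb
    omega
  · refine Or.inl fun x hx hR hm => ?_
    subst hR
    have hc := two_le_rank_corner_two_four hx hm
    have hd := rank_corner_two_two_ne_zero hx hm
    have hab := rank_corner_four_two_ne_rank_corner_four_four hx hm
    have hba := rank_corner_le_rank_corner (i := 4) (j := 4) (by norm_num) (by norm_num)
      (by norm_num : 2 ≤ 4) x
    have ha4 := rank_le_width (corner 4 4 (by norm_num) (by norm_num) x)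
    have hb2 := rank_le_width (corner 4 2 (by norm_num) (by norm_num) x)
    have hc2 := rank_le_height (corner 2 4 (by norm_num) (by norm_num) x)
    have hd2 := rank_le_width (corner 2 2 (by norm_num) (by norm_num) x)
    simp [rankMatrix] at hb h1 h2 h3 h4
    omega
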